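/- arXiv:2005.14121 — 4 statements merged into one kernel-verified Lean document; each statement's English description precedes it below -/
import Mathlib

section
/- Let G be the join G = G1 ∇ G2 of two graphs G1 and G2 on disjoint vertex sets. Then the metamour graph of G equals the complement of G, and this complement has at least two connected components. -/
namespace SimpleGraph

variable {V : Type*}

/-- The metamour graph of `G`: same vertices, adjacency = distance exactly 2 in `G`. -/
def metamour (G : SimpleGraph V) : SimpleGraph V where
  Adj u v := G.dist u v = 2
  symm := by
    constructor
    intro u v h
    rwa [dist_comm]
  loopless := by
    constructor
    intro v h
    simp [dist_self] at h

/-- The metamour-degree of a vertex: the number of its metamours. -/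
noncomputable def metamourDegree (G : SimpleGraph V) (v : V) : ℕ :=
  {u | G.metamour.Adj v u}.ncard

end SimpleGraph

/-- The join of two graphs on disjoint vertex sets: all edges within each part as
given, plus all edges between the two parts. -/
def graphJoin {A B : Type*} (G1 : SimpleGraph A) (G2 : SimpleGraph B) :
    SimpleGraph (A ⊕ B) where
  Adj x y :=
    match x, y with
    | Sum.inl a, Sum.inl b => G1.Adj a b
    | Sum.inr a, Sum.inr b => G2.Adj a b
    | _, _ => True
  symm := by
    constructor
    rintro (a | a) (b | b) h
    · exact h.symm
    · trivial
    · trivial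
    · exact h.symm
  loopless := by
    constructor
    rintro (a | a) h
    · exact G1.loopless.irrefl a h
    · exact G2.loopless.irrefl a h

/-! In the join, two distinct non-adjacent vertices lie on the same side, so any vertex of the other
side is a common neighbour: they are at distance exactly 2. The complement of the join is the
disjoint union `G1ᶜ ⊕g G2ᶜ`, in which no path crosses from one side to the other. -/

namespace SimpleGraph

variable {V : Type*} {G : SimpleGraph V}

lemma dist_eq_two_iff {u v : V} :
    G.dist u v = 2 ↔ u ≠ v ∧ ¬G.Adj u v ∧ (G.commonNeighbors u v).Nonempty := by
  rw [dist, ENat.toNat_eq_iff two_ne_zero]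
  exact_mod_cast edist_eq_two_iff

lemma metamour_eq_compl
    (h : ∀ u v, u ≠ v → ¬G.Adj u v → (G.commonNeighbors u v).Nonempty) :
    G.metamour = Gᶜ := by
  ext u v
  change G.dist u v = 2 ↔ u ≠ v ∧ ¬G.Adj u v
  rw [dist_eq_two_iff]
  exact ⟨fun ⟨hne, hna, _⟩ ↦ ⟨hne, hna⟩, fun ⟨hne, hna⟩ ↦ ⟨hne, hna, h u v hne hna⟩⟩

end SimpleGraph

open SimpleGraph

section graphJoin

variable {A B : Type*} (G1 : SimpleGraph A) (G2 : SimpleGraph B)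

lemma compl_graphJoin : (graphJoin G1 G2)ᶜ = G1ᶜ ⊕g G2ᶜ := by
  ext (a | a) (b | b) <;> simp [graphJoin]

lemma commonNeighbors_graphJoin_nonempty [Nonempty A] [Nonempty B] {u v : A ⊕ B}
    (huv : ¬(graphJoin G1 G2).Adj u v) : ((graphJoin G1 G2).commonNeighbors u v).Nonempty := by
  rcases u with _ | _ <;> rcases v with _ | _
  · exact ⟨.inr (Classical.arbitrary B), by simp [mem_commonNeighbors, graphJoin]⟩
  · exact absurd trivial huv
  · exact absurd trivial huv
  · exact ⟨.inl (Classical.arbitrary A), by simp [mem_commonNeighbors, graphJoin]⟩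

end graphJoin

/-- For the join G of two (nonempty) graphs, the metamour graph of G
equals the complement of G, and this complement has at least two connected
components. -/
theorem metamour_of_join {A B : Type*} [Nonempty A] [Nonempty B]
    (G1 : SimpleGraph A) (G2 : SimpleGraph B) :
    (graphJoin G1 G2).metamour = (graphJoin G1 G2)ᶜ ∧
      ∃ c d : ((graphJoin G1 G2)ᶜ).ConnectedComponent, c ≠ d := by
  refine ⟨metamour_eq_compl fun _ _ _ ↦ commonNeighbors_graphJoin_nonempty G1 G2, ?_⟩
  rw [compl_graphJoin]
  exact ⟨_, _, ConnectedComponent.eq.not.mpr <|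
    not_reachable_sum_inl_inr (Classical.arbitrary A) (Classical.arbitrary B)⟩
end

section
/- Let G be a connected graph whose metamour graph is not connected, and suppose that for some connected component M_i of the metamour graph M, the induced subgraph G[V(M_i)] is connected. Then G equals the join of the complements of the connected components of M: G = complement(M_1) ∇ ... ∇ complement(M_t), where M_1, ..., M_t are the connected components of M and t ≥ 2. -/
namespace SimpleGraph

variable {V : Type*} {G : SimpleGraph V}

theorem Reachable.induction_adj {W : Type*} {H : SimpleGraph W} {P : W → Prop}
    (hP : ∀ ⦃x y⦄, H.Adj x y → P x → P y) {x y : W} (hxy : H.Reachable x y) (hx : P x) :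
    P y := by
  obtain ⟨p⟩ := hxy
  induction p with
  | nil => exact hx
  | cons hadj _ ih => exact ih (hP hadj hx)

theorem exists_dist_eq_two_of_two_le_dist {u v : V} (h : 2 ≤ G.dist u v) :
    ∃ w, G.dist u w = 2 ∧ G.dist w v + 2 = G.dist u v := by
  have huv : G.Reachable u v := Reachable.of_dist_ne_zero (by omega)
  obtain ⟨p, hp⟩ := huv.exists_walk_length_eq_dist
  match p, hp with
  | .nil, _ => simp at h
  | .cons _ .nil, hp => simp only [Walk.length_cons, Walk.length_nil] at hp; omega
  | .cons h₁ (.cons (v := w) h₂ q), hp =>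
    have hq : G.dist w v ≤ q.length := dist_le q
    have huw : G.dist u w ≤ 2 := by simpa using dist_le (.cons h₁ (.cons h₂ .nil))
    have htri := Reachable.dist_triangle_left ⟨.cons h₁ (.cons h₂ .nil)⟩ (G := G) v
    simp only [Walk.length_cons] at hp
    exact ⟨w, by omega, by omega⟩

/-- `S` is a union of connected components of the metamour graph. -/
def IsMetamourClosed (G : SimpleGraph V) (S : Set V) : Prop :=
  ∀ ⦃x y⦄, x ∈ S → G.metamour.Adj x y → y ∈ S

theorem ConnectedComponent.isMetamourClosed_supp (C : G.metamour.ConnectedComponent) :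
    G.IsMetamourClosed C.supp :=
  fun _ _ hx hxy => C.mem_supp_of_adj_mem_supp hx hxy

theorem ConnectedComponent.exists_notMem_supp {H : SimpleGraph V} (hH : ¬H.Connected)
    (C : H.ConnectedComponent) : ∃ v, v ∉ C.supp := by
  by_contra! hC
  obtain ⟨c, hc⟩ := C.nonempty_supp
  exact hH <| (connected_iff_exists_forall_reachable H).mpr
    ⟨c, fun v => C.reachable_of_mem_supp hc (hC v)⟩

namespace IsMetamourClosed

variable {S : Set V} (hS : G.IsMetamourClosed S)
include hS

theorem dist_ne_two {c d : V} (hc : c ∈ S) (hd : d ∉ S) : G.dist c d ≠ 2 :=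
  fun h => hd (hS hc h)

theorem adj_of_adj_of_adj {d x c : V} (hd : d ∉ S) (hc : c ∈ S) (hdx : G.Adj d x)
    (hxc : G.Adj x c) : G.Adj d c := by
  have hdc : G.Reachable d c := hdx.reachable.trans hxc.reachable
  have hpos : 0 < G.dist d c := hdc.pos_dist_of_ne (fun h => hd (h ▸ hc))
  have hle : G.dist d c ≤ 2 := by simpa using dist_le (.cons hdx (.cons hxc .nil))
  have hne : G.dist d c ≠ 2 := dist_comm (G := G) ▸ hS.dist_ne_two hc hd
  exact dist_eq_one_iff_adj.mp (by omega)

theorem exists_adj_of_reachable {c d : V} (hc : c ∈ S) (hd : d ∉ S) (hcd : G.Reachable c d) :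
    ∃ c' ∈ S, G.Adj c' d := by
  induction hn : G.dist c d using Nat.strong_induction_on generalizing c with
  | _ n ih =>
    by_cases h2 : 2 ≤ G.dist c d
    · obtain ⟨w, hcw, hwd⟩ := exists_dist_eq_two_of_two_le_dist h2
      have hw : w ∈ S := hS hc hcw
      have hwd' : G.Reachable w d := (Reachable.of_dist_ne_zero (by omega)).symm.trans hcd
      have hpos : 0 < G.dist w d := hwd'.pos_dist_of_ne (fun h => hd (h ▸ hw))
      exact ih _ (by omega) hw hwd' rfl
    · have hpos : 0 < G.dist c d := hcd.pos_dist_of_ne (fun h => hd (h ▸ hc))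
      exact ⟨c, hc, dist_eq_one_iff_adj.mp (by omega)⟩

theorem adj_of_notMem_of_mem (hG : G.Connected) (hSconn : (G.induce S).Preconnected)
    {d c : V} (hd : d ∉ S) (hc : c ∈ S) : G.Adj d c := by
  obtain ⟨c₀, hc₀, hadj⟩ := hS.exists_adj_of_reachable hc hd (hG c d)
  have hspread : ∀ ⦃x y : S⦄, (G.induce S).Adj x y → G.Adj d x → G.Adj d y :=
    fun _ y hxy hdx => hS.adj_of_adj_of_adj hd y.2 hdx hxy
  exact (hSconn ⟨c₀, hc₀⟩ ⟨c, hc⟩).induction_adj hspread hadj.symm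

end IsMetamourClosed

theorem eq_compl_metamour_of_exists_common_neighbor
    (h : ∀ u v, u ≠ v → ¬G.Adj u v → ∃ w, G.Adj u w ∧ G.Adj w v) : G = G.metamourᶜ := by
  ext u v
  rw [compl_adj]
  change G.Adj u v ↔ u ≠ v ∧ G.dist u v ≠ 2
  refine ⟨fun huv => ⟨huv.ne, by rw [dist_eq_one_iff_adj.mpr huv]; omega⟩, ?_⟩
  rintro ⟨hne, h2⟩
  by_contra huv
  obtain ⟨w, huw, hwv⟩ := h u v hne huv
  have hpos : 0 < G.dist u v := (huw.reachable.trans hwv.reachable).pos_dist_of_ne hne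
  have hle : G.dist u v ≤ 2 := by simpa using dist_le (.cons huw (.cons hwv .nil))
  exact huv (dist_eq_one_iff_adj.mp (by omega))

theorem exists_common_neighbor_of_forall_adj {S : Set V} (hS : S.Nonempty) (hSc : ∃ d, d ∉ S)
    (h : ∀ d ∉ S, ∀ c ∈ S, G.Adj d c) (u v : V) (huv : ¬G.Adj u v) :
    ∃ w, G.Adj u w ∧ G.Adj w v := by
  obtain ⟨c, hc⟩ := hS
  obtain ⟨d, hd⟩ := hSc
  by_cases hu : u ∈ S <;> by_cases hv : v ∈ S
  · exact ⟨d, (h d hd u hu).symm, h d hd v hv⟩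
  · exact absurd (h v hv u hu).symm huv
  · exact absurd (h u hu v hv) huv
  · exact ⟨c, h u hu c hc, (h v hv c hc).symm⟩

end SimpleGraph

/-- If G is connected, its metamour graph M is disconnected, and the
subgraph of G induced on the vertices of some connected component of M is connected,
then G is the join of the complements of the connected components of M, i.e., G
equals the complement of M. -/
theorem join_decomposition_of_disconnected_metamour {V : Type*} (G : SimpleGraph V)
    (hG : G.Connected) (hM : ¬ G.metamour.Connected)
    (h : ∃ c : G.metamour.ConnectedComponent, (G.induce c.supp).Connected) :
    G = G.metamourᶜ := by
  obtain ⟨C, hC⟩ := h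
  have hjoin : ∀ d ∉ C.supp, ∀ c ∈ C.supp, G.Adj d c := fun _ hd _ hc =>
    C.isMetamourClosed_supp.adj_of_notMem_of_mem hG hC.preconnected hd hc
  exact SimpleGraph.eq_compl_metamour_of_exists_common_neighbor fun u v _ huv =>
    SimpleGraph.exists_common_neighbor_of_forall_adj C.nonempty_supp (C.exists_notMem_supp hM)
      hjoin u v huv
end

section
/- Let k ≥ 0 and let G be a connected graph in which every vertex has at most k metamours. If the metamour graph of G has at least three connected components M_1, ..., M_t (t ≥ 3), then G = complement(M_1) ∇ ... ∇ complement(M_t). -/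
/-!
Along a shortest path `u = p₀, p₁, …, pₙ = v` the vertices `pᵢ` and `pᵢ₊₂` are metamours, so
every `pᵢ` lies in the metamour component of `p₀` or of `p₁`. The same observation, applied to
a shortest path to `u` from a vertex of a component `C` other than those of `p₀` and `p₁`,
produces a neighbour `x ∈ C` of `u`. Two vertices at distance at most 2 in different metamour
components are adjacent, so `x` is adjacent to `p₁, p₂, …` in turn, hence to `v`, and
`d(u, v) ≤ 2`. A connected graph of diameter at most 2 is the complement of its metamour graph.
-/

lemma exists_ne_and_ne_of_three_ne {α : Type*} (h3 : ∃ c d e : α, c ≠ d ∧ c ≠ e ∧ d ≠ e)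
    (a b : α) : ∃ x, x ≠ a ∧ x ≠ b := by
  obtain ⟨c, d, e, hcd, hce, hde⟩ := h3
  by_contra! h
  rcases eq_or_ne c a with rfl | hca
  · exact hde ((h d hcd.symm).trans (h e hce.symm).symm)
  · obtain rfl := h c hca
    rcases eq_or_ne d a with rfl | hda
    · exact hce (h e hde.symm).symm
    · exact hcd (h d hda).symm

namespace SimpleGraph

variable {V : Type*} {G : SimpleGraph V} {u v x y : V}

lemma adj_of_dist_le_two_of_not_metamour_reachable (hxy : G.Reachable x y)
    (hd : G.dist x y ≤ 2) (hm : ¬ G.metamour.Reachable x y) : G.Adj x y := by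
  have hne : x ≠ y := by rintro rfl; exact hm .rfl
  have hpos : 0 < G.dist x y := hxy.pos_dist_of_ne hne
  have hd2 : G.dist x y ≠ 2 := fun h ↦ hm (Adj.reachable (G := G.metamour) h)
  exact dist_eq_one_iff_adj.mp (by omega)

lemma Walk.dist_getVert_add_two {p : G.Walk u v} (hp : p.length = G.dist u v) {i : ℕ}
    (hi : i + 2 ≤ p.length) : G.dist (p.getVert i) (p.getVert (i + 2)) = 2 := by
  have hstart : G.dist u (p.getVert i) ≤ i := by
    simpa [show i ≤ p.length by omega] using dist_le (p.take i)
  have hend : G.dist (p.getVert (i + 2)) v ≤ p.length - (i + 2) := by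
    simpa using dist_le (p.drop (i + 2))
  have hmid : G.dist (p.getVert i) (p.getVert (i + 2)) ≤ 2 := by
    have h := dist_le ((p.drop i).take 2)
    rw [Walk.take_length, le_inf_iff, Walk.drop_getVert] at h
    exact h.1
  have htri₁ := (p.take i).reachable.dist_triangle_left v
  have htri₂ := (p.drop (i + 2)).reachable.dist_triangle_right (p.getVert i)
  omega

lemma Walk.metamour_reachable_getVert_add_two_mul {p : G.Walk u v}
    (hp : p.length = G.dist u v) {i : ℕ} :
    ∀ {j : ℕ}, i + 2 * j ≤ p.length → G.metamour.Reachable (p.getVert i) (p.getVert (i + 2 * j))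
  | 0, _ => .rfl
  | j + 1, hj =>
    (metamour_reachable_getVert_add_two_mul hp (by omega)).trans <| Adj.reachable <|
      show G.dist _ _ = 2 from (p.dist_getVert_add_two hp (by omega))

lemma Walk.metamour_reachable_getVert {p : G.Walk u v} (hp : p.length = G.dist u v) {i : ℕ}
    (hi : i ≤ p.length) :
    G.metamour.Reachable u (p.getVert i) ∨ G.metamour.Reachable (p.getVert 1) (p.getVert i) := by
  obtain ⟨j, rfl | rfl⟩ := Nat.even_or_odd' i
  · left
    simpa using p.metamour_reachable_getVert_add_two_mul hp (i := 0) (by omega)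
  · right
    simpa [add_comm] using p.metamour_reachable_getVert_add_two_mul hp (i := 1) (by omega)

lemma Walk.adj_getVert_of_not_metamour_reachable {p : G.Walk u v} (hp : p.length = G.dist u v)
    (hxu : G.Adj x u) (hu : ¬ G.metamour.Reachable x u)
    (h1 : ¬ G.metamour.Reachable x (p.getVert 1)) :
    ∀ {i : ℕ}, i ≤ p.length → G.Adj x (p.getVert i)
  | 0, _ => by simpa using hxu
  | i + 1, hi => by
    have hprev := adj_getVert_of_not_metamour_reachable hp hxu hu h1 (i := i) (by omega)
    have hstep := p.adj_getVert_succ (i := i) (by omega)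
    refine adj_of_dist_le_two_of_not_metamour_reachable (hprev.reachable.trans hstep.reachable)
      (dist_le (.cons hprev (.cons hstep .nil))) fun hx ↦ ?_
    rcases p.metamour_reachable_getVert hp hi with h | h
    · exact hu (hx.trans h.symm)
    · exact h1 (hx.trans h.symm)

lemma Connected.exists_adj_metamour_reachable (hG : G.Connected)
    (h : ¬ G.metamour.Reachable y u) : ∃ x, G.Adj x u ∧ G.metamour.Reachable y x := by
  obtain ⟨p, hp⟩ := hG.exists_walk_length_eq_dist y u
  obtain ⟨j, hj | hj⟩ := Nat.even_or_odd' p.length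
  · refine absurd ?_ h
    simpa [← hj] using p.metamour_reachable_getVert_add_two_mul hp (i := 0) (j := j) (by omega)
  · refine ⟨p.getVert (2 * j), ?_, ?_⟩
    · simpa [← hj] using p.adj_getVert_succ (i := 2 * j) (by omega)
    · simpa using p.metamour_reachable_getVert_add_two_mul hp (i := 0) (j := j) (by omega)

lemma Connected.dist_le_two_of_three_metamour_components (hG : G.Connected)
    (h3 : ∃ c d e : G.metamour.ConnectedComponent, c ≠ d ∧ c ≠ e ∧ d ≠ e) (u v : V) :
    G.dist u v ≤ 2 := by
  obtain ⟨p, hp⟩ := hG.exists_walk_length_eq_dist u v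
  obtain ⟨C, hCu, hC1⟩ := exists_ne_and_ne_of_three_ne h3
    (G.metamour.connectedComponentMk u) (G.metamour.connectedComponentMk (p.getVert 1))
  induction C using ConnectedComponent.ind with | h y => ?_
  rw [Ne, ConnectedComponent.eq] at hCu hC1
  obtain ⟨x, hxu, hyx⟩ := hG.exists_adj_metamour_reachable hCu
  have hxv : G.Adj x v := by
    simpa using p.adj_getVert_of_not_metamour_reachable hp hxu
      (fun h ↦ hCu (hyx.trans h)) (fun h ↦ hC1 (hyx.trans h)) le_rfl
  exact dist_le (.cons hxu.symm (.cons hxv .nil))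

lemma eq_compl_metamour_of_dist_le_two (hG : G.Preconnected) (h : ∀ u v, G.dist u v ≤ 2) :
    G = G.metamourᶜ := by
  ext u v
  rw [compl_adj, ← dist_eq_one_iff_adj]
  change _ ↔ u ≠ v ∧ G.dist u v ≠ 2
  have hle := h u v
  have hzero := (hG u v).dist_eq_zero_iff
  by_cases huv : u = v <;> grind

end SimpleGraph

theorem join_decomposition_of_three_components_general {V : Type*}
    (G : SimpleGraph V) (hG : G.Connected)
    (h3 : ∃ c d e : G.metamour.ConnectedComponent, c ≠ d ∧ c ≠ e ∧ d ≠ e) :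
    G = G.metamourᶜ :=
  SimpleGraph.eq_compl_metamour_of_dist_le_two hG.preconnected
    (hG.dist_le_two_of_three_metamour_components h3)

/-- If G is connected with maximum metamour-degree at most k and its
metamour graph has at least three connected components, then G is the join of the
complements of the connected components of the metamour graph, i.e., G equals the
complement of its metamour graph. -/
theorem join_decomposition_of_three_components {V : Type*} [Fintype V] (k : ℕ)
    (G : SimpleGraph V) (hG : G.Connected)
    (hk : ∀ v : V, {u | G.metamour.Adj v u}.ncard ≤ k)
    (h3 : ∃ c d e : G.metamour.ConnectedComponent, c ≠ d ∧ c ≠ e ∧ d ≠ e) :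
    G = G.metamourᶜ :=
  join_decomposition_of_three_components_general G hG h3
end

section
/- For n ≥ 5, the cycle graph C_n is 2-metamour-regular; moreover, if n is odd then the metamour graph of C_n is connected (it is a cycle of length n), while if n is even the metamour graph of C_n consists of exactly two disjoint cycles of length n/2. -/
/-!
The cycle `C_n` is the circulant graph on `ℤ/n` with jump `1`. As long as `3 ≠ 0` in `ℤ/n`, two
vertices are at distance exactly `2` iff they differ by `±2`, so the metamour graph is the
circulant graph with jump `2`, which is `2`-regular once `4 ≠ 0`. For odd `n`, multiplication by
the unit `2` turns jump `1` into jump `2`, so the metamour graph is again `C_n`. For `n = 2m`, the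
bijection `(i, r) ↦ 2i + r` from `ℤ/m × {0, 1}` to `ℤ/2m` turns the shift by `(1, 0)` into the
shift by `2`, so the metamour graph is two copies of `C_m`, one on each parity class.
-/

section FinRing

open Fin.CommRing

theorem Fin.natCast_ne_zero_of_lt {n k : ℕ} [NeZero n] (hk₀ : k ≠ 0) (hk : k < n) :
    (k : Fin n) ≠ 0 := by
  rw [Ne, Fin.natCast_eq_zero]
  exact fun h => (Nat.le_of_dvd (Nat.pos_of_ne_zero hk₀) h).not_gt hk

theorem Fin.isUnit_two_of_odd {n : ℕ} [NeZero n] (hn : Odd n) : IsUnit (2 : Fin n) := by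
  obtain ⟨k, rfl⟩ := hn
  refine IsUnit.of_mul_eq_one ((k + 1 : ℕ) : Fin (2 * k + 1)) ?_
  have h : ((2 * k + 1 + 1 : ℕ) : Fin (2 * k + 1)) = 1 := by
    rw [Nat.cast_add, Fin.natCast_self, zero_add, Nat.cast_one]
  rw [← h]
  push_cast
  ring

theorem finProdFinEquiv_one_zero_add {m : ℕ} [NeZero m] (x : Fin m × Fin 2) :
    finProdFinEquiv ((1, 0) + x) = 2 + finProdFinEquiv x := by
  obtain ⟨i, ⟨r, hr⟩⟩ := x
  ext
  simp only [Fin.isValue, Prod.mk_add_mk, zero_add, finProdFinEquiv_apply_val, Fin.val_add,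
    Fin.coe_ofNat_eq_mod, Nat.mod_add_mod]
  have hdiv := Nat.mod_add_div (1 + i) m
  have hmod := Nat.mod_lt (1 + i) (NeZero.pos m)
  rw [show 2 + (r + 2 * (i : ℕ)) = r + 2 * ((1 + i) % m) + m * 2 * ((1 + i) / m) by linarith,
    Nat.add_mul_mod_self_left, Nat.mod_eq_of_lt (a := r + 2 * ((1 + i) % m)) (by omega)]

end FinRing

namespace SimpleGraph

variable {V A B : Type*}

theorem metamour_adj_iff {G : SimpleGraph V} {u v : V} :
    G.metamour.Adj u v ↔ u ≠ v ∧ ¬G.Adj u v ∧ (G.commonNeighbors u v).Nonempty :=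
  (ENat.toNat_eq_iff two_ne_zero).trans edist_eq_two_iff

section AddCommGroup

variable [AddCommGroup A] {g : A}

theorem metamour_circulantGraph_singleton (hg : 3 • g ≠ 0) :
    (circulantGraph {g}).metamour = circulantGraph {2 • g} := by
  have hg₀ : g ≠ 0 := by rintro rfl; simp at hg
  ext u v
  simp only [metamour_adj_iff, circulantGraph_adj, Set.mem_singleton_iff, Set.Nonempty,
    mem_commonNeighbors]
  constructor
  · rintro ⟨huv, -, w, ⟨-, huw⟩, -, hwv⟩
    grind
  · rintro ⟨huv, h | h⟩
    · exact ⟨huv, by grind, v + g, by grind⟩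
    · exact ⟨huv, by grind, u + g, by grind⟩

theorem ncard_neighborSet_circulantGraph_singleton (hg : 2 • g ≠ 0) (v : A) :
    ((circulantGraph {g}).neighborSet v).ncard = 2 := by
  have hg₀ : g ≠ 0 := by rintro rfl; simp at hg
  have hv : (circulantGraph {g}).neighborSet v = {v - g, v + g} := by
    ext u
    simp only [mem_neighborSet, circulantGraph_adj, Set.mem_singleton_iff, Set.mem_insert_iff]
    grind
  rw [hv, Set.ncard_pair]
  grind

end AddCommGroup

def Iso.circulantGraphOfMapAdd [AddGroup A] [AddGroup B] (f : A ≃ B) {g : A} {h : B}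
    (hf : ∀ x, f (g + x) = h + f x) : circulantGraph {g} ≃g circulantGraph {h} where
  toEquiv := f
  map_rel_iff' := by
    simp only [circulantGraph_adj, Set.mem_singleton_iff, sub_eq_iff_eq_add, ← hf,
      f.injective.eq_iff, implies_true]

def Iso.circulantGraphProdFinTwo [AddGroup A] (g : A) :
    (circulantGraph {(g, 0)} : SimpleGraph (A × Fin 2)) ≃g
      circulantGraph {g} ⊕g circulantGraph {g} where
  toEquiv := (Equiv.prodCongr (Equiv.refl A) finTwoEquiv).trans
    ((Equiv.prodComm _ _).trans (Equiv.boolProdEquivSum A))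
  map_rel_iff' {x y} := by
    obtain ⟨a, i⟩ := x
    obtain ⟨b, j⟩ := y
    fin_cases i <;> fin_cases j <;> simp [circulantGraph_adj, finTwoEquiv]

section CycleGraph

open Fin.CommRing

theorem metamour_cycleGraph {n : ℕ} [NeZero n] (hn : 4 ≤ n) :
    (cycleGraph n).metamour = circulantGraph {2} := by
  obtain ⟨k, rfl⟩ : ∃ k, n = k + 1 := ⟨n - 1, by omega⟩
  have h3 : 3 • (1 : Fin (k + 1)) ≠ 0 := by
    rw [nsmul_one]
    exact Fin.natCast_ne_zero_of_lt (by norm_num) (by omega)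
  rw [cycleGraph_eq_circulantGraph, metamour_circulantGraph_singleton h3, nsmul_one,
    Nat.cast_ofNat]

theorem metamourDegree_cycleGraph {n : ℕ} (hn : 5 ≤ n) (v : Fin n) :
    (cycleGraph n).metamourDegree v = 2 := by
  have : NeZero n := ⟨by omega⟩
  have h4 : 2 • (2 : Fin n) ≠ 0 := by
    rw [show 2 • (2 : Fin n) = ((4 : ℕ) : Fin n) by norm_num]
    exact Fin.natCast_ne_zero_of_lt (by norm_num) (by omega)
  change ((cycleGraph n).metamour.neighborSet v).ncard = 2
  rw [metamour_cycleGraph (by omega)]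
  exact ncard_neighborSet_circulantGraph_singleton h4 v

theorem nonempty_metamour_cycleGraph_iso_of_odd {n : ℕ} (hn : 4 ≤ n) (hodd : Odd n) :
    Nonempty ((cycleGraph n).metamour ≃g cycleGraph n) := by
  obtain ⟨k, rfl⟩ : ∃ k, n = k + 1 := ⟨n - 1, by omega⟩
  rw [metamour_cycleGraph hn, cycleGraph_eq_circulantGraph]
  set u := (Fin.isUnit_two_of_odd hodd).unit
  refine ⟨(Iso.circulantGraphOfMapAdd u.mulLeft fun x => ?_).symm⟩
  simp [u, mul_add]

theorem nonempty_metamour_cycleGraph_iso_sum {m : ℕ} (hm : 2 ≤ m) :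
    Nonempty ((cycleGraph (m * 2)).metamour ≃g cycleGraph m ⊕g cycleGraph m) := by
  obtain ⟨k, rfl⟩ : ∃ k, m = k + 1 := ⟨m - 1, by omega⟩
  have : NeZero ((k + 1) * 2) := ⟨by omega⟩
  rw [metamour_cycleGraph (by omega), cycleGraph_eq_circulantGraph]
  exact ⟨(Iso.circulantGraphOfMapAdd finProdFinEquiv finProdFinEquiv_one_zero_add).symm.trans
    (Iso.circulantGraphProdFinTwo 1)⟩

end CycleGraph

end SimpleGraph

/-- For n ≥ 5 the cycle C_n is 2-metamour-regular; for odd n its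
metamour graph is connected and is a cycle of length n, while for even n its
metamour graph is the disjoint union of two cycles of length n/2. -/
theorem cycleGraph_metamour (n : ℕ) (hn : 5 ≤ n) :
    (∀ v : Fin n, (SimpleGraph.cycleGraph n).metamourDegree v = 2) ∧
    (Odd n → (SimpleGraph.cycleGraph n).metamour.Connected ∧
      Nonempty ((SimpleGraph.cycleGraph n).metamour ≃g SimpleGraph.cycleGraph n)) ∧
    (Even n → Nonempty ((SimpleGraph.cycleGraph n).metamour ≃g
      (SimpleGraph.cycleGraph (n / 2) ⊕g SimpleGraph.cycleGraph (n / 2)))) := by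
  open SimpleGraph in
  refine ⟨metamourDegree_cycleGraph hn, fun hodd => ?_, fun heven => ?_⟩
  · obtain ⟨e⟩ := nonempty_metamour_cycleGraph_iso_of_odd (by omega) hodd
    have : NeZero n := ⟨by omega⟩
    exact ⟨e.connected_iff.mpr ⟨cycleGraph_preconnected⟩, ⟨e⟩⟩
  · obtain ⟨m, rfl⟩ : ∃ m, n = m * 2 := ⟨n / 2, by grind⟩
    rw [Nat.mul_div_cancel m two_pos]
    exact nonempty_metamour_cycleGraph_iso_sum (by omega)
end
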